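/- The involution ρ preserves the first letter and the descent number: for all π ∈ S_n, F(ρ(π)) = F(π) and des(ρ(π)) = des(π). -/

import Mathlib

namespace BS

/-- `l` is (the one-line notation of) a permutation of `{1,...,n}`. -/
def isPerm (l : List ℕ) (n : ℕ) : Prop := l.Perm ((List.range n).map (· + 1))

/-- number of inversions -/
def inv (l : List ℕ) : ℕ :=
  ((Finset.range l.length ×ˢ Finset.range l.length).filter
    (fun p => p.1 < p.2 ∧ l.getD p.2 0 < l.getD p.1 0)).card

/-- the set of (0-indexed) descent positions -/
def desSet (l : List ℕ) : Finset ℕ :=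
  (Finset.range (l.length - 1)).filter (fun i => l.getD (i + 1) 0 < l.getD i 0)

def des (l : List ℕ) : ℕ := (desSet l).card

/-- major index: sum of the (1-indexed) descent positions -/
def maj (l : List ℕ) : ℕ := ∑ i ∈ desSet l, (i + 1)

/-- number of occurrences of the generalized pattern ac-b (132, first two letters adjacent) -/
def acb (l : List ℕ) : ℕ :=
  ((Finset.range l.length ×ˢ Finset.range l.length).filter
    (fun p => p.1 + 2 ≤ p.2 ∧ l.getD p.1 0 < l.getD p.2 0 ∧ l.getD p.2 0 < l.getD (p.1 + 1) 0)).card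

/-- number of occurrences of the generalized pattern ba-c (213, first two letters adjacent) -/
def bac (l : List ℕ) : ℕ :=
  ((Finset.range l.length ×ˢ Finset.range l.length).filter
    (fun p => p.1 + 2 ≤ p.2 ∧ l.getD (p.1 + 1) 0 < l.getD p.1 0 ∧ l.getD p.1 0 < l.getD p.2 0)).card

/-- number of occurrences of the generalized pattern cb-a (321, first two letters adjacent) -/
def cba (l : List ℕ) : ℕ :=
  ((Finset.range l.length ×ˢ Finset.range l.length).filter
    (fun p => p.1 + 2 ≤ p.2 ∧ l.getD p.2 0 < l.getD (p.1 + 1) 0 ∧ l.getD (p.1 + 1) 0 < l.getD p.1 0)).card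

/-- Babson–Steingrímsson's statistic stat = (ac-b)+(ba-c)+(cb-a)+(ba) -/
def stat (l : List ℕ) : ℕ := acb l + bac l + cba l + des l

/-- first letter -/
def F (l : List ℕ) : ℕ := l.headD 0

/-- insertion space `j` (i.e. between letters `j-1` and `j`, 0-indexed) is a descent space -/
def isDescSpace (σ : List ℕ) (j : ℕ) : Prop :=
  1 ≤ j ∧ j < σ.length ∧ σ.getD j 0 < σ.getD (j - 1) 0

instance (σ : List ℕ) (j : ℕ) : Decidable (isDescSpace σ j) := by
  unfold isDescSpace; infer_instance

def isAscSpace (σ : List ℕ) (j : ℕ) : Prop :=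
  1 ≤ j ∧ j < σ.length ∧ σ.getD (j - 1) 0 < σ.getD j 0

instance (σ : List ℕ) (j : ℕ) : Decidable (isAscSpace σ j) := by
  unfold isAscSpace; infer_instance

/-- maj-labeling of the insertion spaces `0,...,σ.length`: the final space gets `0`,
descent spaces get `1,...,des σ` from right to left, the remaining spaces get
`des σ + 1, ...` from left to right. -/
def majLabel (σ : List ℕ) (j : ℕ) : ℕ :=
  if j = σ.length then 0
  else if isDescSpace σ j then
    1 + ((Finset.Ico (j + 1) σ.length).filter (fun t => isDescSpace σ t)).card
  else des σ + 1 + ((Finset.range j).filter (fun t => ¬ isDescSpace σ t)).card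

/-- stat-labeling of the insertion spaces: descent spaces and the final space get
`0,...,des σ` from left to right, the initial space gets `des σ + 1`, and ascent
spaces get `des σ + 2, ...` from right to left. -/
def statLabel (σ : List ℕ) (j : ℕ) : ℕ :=
  if j = σ.length then des σ
  else if isDescSpace σ j then ((Finset.range j).filter (fun t => isDescSpace σ t)).card
  else if j = 0 then des σ + 1
  else des σ + 1 + ((Finset.Ico j σ.length).filter (fun t => isAscSpace σ t)).card

/-- index of the insertion space carrying label `i` in the labeling `lab` -/
def spaceOfLabel (lab : List ℕ → ℕ → ℕ) (σ : List ℕ) (i : ℕ) : ℕ :=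
  ((List.range (σ.length + 1)).find? (fun j => decide (lab σ j = i))).getD 0

/-- insert `v` at the space with inv-label `i` (spaces labeled from right to left) -/
def insertAtInvLabel (i : ℕ) (σ : List ℕ) (v : ℕ) : List ℕ :=
  σ.insertIdx (σ.length - i) v

def insertAtMajLabel (i : ℕ) (σ : List ℕ) (v : ℕ) : List ℕ :=
  σ.insertIdx (spaceOfLabel majLabel σ i) v

def insertAtStatLabel (i : ℕ) (σ : List ℕ) (v : ℕ) : List ℕ :=
  σ.insertIdx (spaceOfLabel statLabel σ i) v

/-- inversion table: `c_i` is the inv-label of the space of `π⁽ⁱ⁻¹⁾` that letter `i` occupies -/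
def invTable (π : List ℕ) : List ℕ :=
  (List.range π.length).map (fun k =>
    if k = 0 then 0
    else (π.filter (· ≤ k)).length - (π.filter (· ≤ k + 1)).idxOf (k + 1))

/-- major index table -/
def majTable (π : List ℕ) : List ℕ :=
  (List.range π.length).map (fun k =>
    if k = 0 then 0
    else majLabel (π.filter (· ≤ k)) ((π.filter (· ≤ k + 1)).idxOf (k + 1)))

/-- stat table -/
def statTable (π : List ℕ) : List ℕ :=
  (List.range π.length).map (fun k =>
    if k = 0 then 0
    else statLabel (π.filter (· ≤ k)) ((π.filter (· ≤ k + 1)).idxOf (k + 1)))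

/-- `w ∈ E_n`, i.e. `w = w₁⋯wₙ` with `0 ≤ wᵢ ≤ i - 1` -/
def memE (w : List ℕ) (n : ℕ) : Prop :=
  w.length = n ∧ ∀ k < n, w.getD k 0 ≤ k

/-- the map ρ : complement-reverse `π⁽ᵏ⁾` (k the first letter) behind its first letter,
then reinsert `k+1,…,n` at the maj-labels given by the stat table of `π`. -/
def rho (π : List ℕ) : List ℕ :=
  let n := π.length
  let k := π.headD 0
  let s := statTable π
  (List.range (n - k)).foldl
    (fun σ m => insertAtMajLabel (s.getD (k + m) 0) σ (k + m + 1))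
    (k :: (((π.filter (· ≤ k)).tail.map (fun x => k - x)).reverse))

/-- the finset of one-line notations of permutations of `{1,…,n}` -/
def perms (n : ℕ) : Finset (List ℕ) :=
  (((List.range n).map (· + 1)).permutations).toFinset

/-- the q-factorial `[n]_q!` -/
def qFact {R : Type*} [CommSemiring R] (q : R) (n : ℕ) : R :=
  ∏ k ∈ Finset.range n, ∑ j ∈ Finset.range (k + 1), q ^ j

end BS

/-! Inserting a new largest letter into a word adds a descent, unless it is inserted into a
descent space or the final space. Both the maj-labeling and the stat-labeling give exactly
these spaces the labels `0, …, des`. Hence inserting `i` into `σ^{(i-1)}` at maj-label `sᵢ`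
changes the descent number just as inserting `i` into `π^{(i-1)}` at its stat-label `sᵢ` does.
The initial words `σ^{(k)}` and `π^{(k)}` have the same descent number, because
complement-reversal of `p₂ ⋯ p_k` preserves descents, so `des` agrees at every stage. The first
letter survives because the stat-label of a space to the right of the first letter is never
`des + 1`, which is the maj-label of the initial space. -/

theorem List.insertIdx_idxOf_erase {α : Type*} [DecidableEq α] {l : List α} {a : α}
    (ha : a ∈ l) : (l.erase a).insertIdx (l.idxOf a) a = l := by
  have h := List.idxOf_lt_length_of_mem ha
  have := List.insertIdx_eraseIdx_getElem h
  rwa [List.getElem_idxOf h, List.eraseIdx_idxOf_eq_erase] at this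

open Finset in
theorem Finset.card_filter_range_lt_of_lt {p : ℕ → Prop} [DecidablePred p] {a b : ℕ}
    (hab : a < b) (ha : p a) : #{t ∈ range a | p t} < #{t ∈ range b | p t} := by
  refine card_lt_card (ssubset_iff_of_subset ?_ |>.mpr ⟨a, ?_, ?_⟩)
  · exact filter_subset_filter _ (range_subset_range.mpr hab.le)
  · simp [hab, ha]
  · simp

open Finset in
theorem Finset.card_filter_Ico_lt_of_lt {p : ℕ → Prop} [DecidablePred p] {a b N : ℕ}
    (hab : a < b) (hbN : b < N) (hb : p b) :
    #{t ∈ Ico (b + 1) N | p t} < #{t ∈ Ico (a + 1) N | p t} := by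
  refine card_lt_card (ssubset_iff_of_subset ?_ |>.mpr ⟨b, ?_, ?_⟩)
  · exact filter_subset_filter _ (Ico_subset_Ico_left (by omega))
  · simp only [mem_filter, mem_Ico, Order.add_one_le_iff, hb, and_true]
    omega
  · simp

namespace BS

open Finset

@[simp] theorem des_nil : des [] = 0 := by simp [des, desSet]

@[simp] theorem des_singleton (a : ℕ) : des [a] = 0 := by simp [des, desSet]

theorem des_cons_cons (a b : ℕ) (t : List ℕ) :
    des (a :: b :: t) = des (b :: t) + if b < a then 1 else 0 := by
  simp only [des, desSet, List.length_cons, Nat.add_sub_cancel, range_add_one',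
    filter_insert, filter_map]
  split_ifs <;> simp_all [card_insert_of_notMem] <;> rfl

theorem not_isDescSpace_zero (σ : List ℕ) : ¬ isDescSpace σ 0 := by simp [isDescSpace]

theorem isDescSpace_cons_cons_one (a b : ℕ) (t : List ℕ) :
    isDescSpace (a :: b :: t) 1 ↔ b < a := by simp [isDescSpace]

theorem isDescSpace_cons_add_two (a : ℕ) (t : List ℕ) (j : ℕ) :
    isDescSpace (a :: t) (j + 2) ↔ isDescSpace t (j + 1) := by
  unfold isDescSpace
  rw [show j + 2 - 1 = j + 1 from rfl, show j + 1 - 1 = j from rfl]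
  simp only [List.length_cons, List.getD_cons_succ]
  omega

theorem des_insertIdx_of_forall_lt {σ : List ℕ} {v j : ℕ} (hv : ∀ x ∈ σ, x < v)
    (hj : j ≤ σ.length) :
    des (σ.insertIdx j v) = des σ + if j = σ.length ∨ isDescSpace σ j then 0 else 1 := by
  induction σ generalizing j with
  | nil =>
    obtain rfl : j = 0 := by simpa using hj
    simp
  | cons a t ih =>
    have ha : a < v := hv a List.mem_cons_self
    rcases j with _ | _ | j
    · simp [des_cons_cons, ha, not_isDescSpace_zero]
    · rcases t with _ | ⟨b, r⟩
      · simp [des_cons_cons, ha.le]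
      · have hb : b < v := hv b (by simp)
        simp only [List.insertIdx_succ_cons, List.insertIdx_zero, des_cons_cons, hb, ↓reduceIte,
          List.length_cons, Nat.right_eq_add, Nat.add_eq_zero_iff, List.length_eq_zero_iff,
          one_ne_zero, and_false, isDescSpace_cons_cons_one, false_or, zero_add]
        split_ifs <;> omega
    · rcases t with _ | ⟨b, r⟩
      · simp at hj
      · have := ih (j := j + 1) (fun x hx => hv x (List.mem_cons_of_mem _ hx)) (by simpa using hj)
        simp only [List.insertIdx_succ_cons, des_cons_cons, isDescSpace_cons_add_two,
          List.length_cons] at this ⊢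
        simp only [this, Nat.add_right_cancel_iff]
        omega

theorem des_append_pair (l : List ℕ) (y x : ℕ) :
    des (l ++ [y, x]) = des (l ++ [y]) + if x < y then 1 else 0 := by
  induction l with
  | nil => exact des_cons_cons y x []
  | cons a l ih =>
    rcases l with _ | ⟨b, r⟩
    · simp only [List.cons_append, List.nil_append, des_cons_cons, des_singleton, zero_add]
      omega
    · simp only [List.cons_append, des_cons_cons] at ih ⊢
      omega

theorem des_reverse_map_tsub (c : ℕ) :
    ∀ t : List ℕ, (∀ x ∈ t, x ≤ c) → des ((t.map (c - ·)).reverse) = des t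
  | [], _ => rfl
  | [_], _ => rfl
  | a :: b :: r, h => by
    have ha := h a (by simp)
    have hb := h b (by simp)
    have ih := des_reverse_map_tsub c (b :: r) fun x hx => h x (List.mem_cons_of_mem a hx)
    simp only [List.map_cons, List.reverse_cons, List.append_assoc, List.singleton_append] at ih ⊢
    have hcmp : c - a < c - b ↔ b < a := by omega
    rw [des_append_pair, ih, des_cons_cons]
    simp only [hcmp]

theorem des_cons_of_forall_lt {a : ℕ} {t : List ℕ} (h : ∀ x ∈ t, x < a) :
    des (a :: t) = des t + if t = [] then 0 else 1 := by
  rcases t with _ | ⟨b, r⟩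
  · rfl
  · simp [des_cons_cons, h b (by simp)]

theorem des_cons_reverse_map_tsub {k : ℕ} {t : List ℕ} (h : ∀ x ∈ t, 0 < x ∧ x < k) :
    des (k :: (t.map (k - ·)).reverse) = des (k :: t) := by
  have hle : ∀ x ∈ t, x ≤ k := fun x hx => (h x hx).2.le
  have hlt : ∀ y ∈ (t.map (k - ·)).reverse, y < k := by
    simp only [List.mem_reverse, List.mem_map]
    rintro _ ⟨x, hx, rfl⟩
    have := h x hx
    omega
  rw [des_cons_of_forall_lt hlt, des_cons_of_forall_lt fun x hx => (h x hx).2,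
    des_reverse_map_tsub k t hle]
  simp

theorem des_eq_card_isDescSpace (σ : List ℕ) :
    des σ = #{t ∈ range σ.length | isDescSpace σ t} := by
  rw [des, ← card_map (addRightEmbedding 1)]
  congr 1
  ext t
  simp only [desSet, mem_map, mem_filter, mem_range, addRightEmbedding_apply]
  unfold isDescSpace
  constructor
  · rintro ⟨i, ⟨hi, hdesc⟩, rfl⟩
    exact ⟨by omega, by omega, by omega, hdesc⟩
  · rintro ⟨-, ht1, ht, hdesc⟩
    refine ⟨t - 1, ⟨by omega, ?_⟩, by omega⟩
    rwa [Nat.sub_add_cancel ht1]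

theorem des_add_card_isAscSpace_lt {σ : List ℕ} (hσ : σ ≠ []) :
    des σ + #{t ∈ range σ.length | isAscSpace σ t} < σ.length := by
  have hdisj : Disjoint {t ∈ range σ.length | isDescSpace σ t}
      {t ∈ range σ.length | isAscSpace σ t} := by
    simp only [disjoint_left, mem_filter]
    unfold isDescSpace isAscSpace
    omega
  have hsub : {t ∈ range σ.length | isDescSpace σ t} ∪
      {t ∈ range σ.length | isAscSpace σ t} ⊆ (range σ.length).erase 0 := by
    intro t
    simp only [mem_union, mem_filter, mem_erase, mem_range]
    unfold isDescSpace isAscSpace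
    omega
  have hlen : 0 < σ.length := List.length_pos_iff.mpr hσ
  have := card_le_card hsub
  rw [card_union_of_disjoint hdisj, card_erase_of_mem (by simpa using hlen), card_range] at this
  rw [des_eq_card_isDescSpace]
  omega

theorem des_le_length (σ : List ℕ) : des σ ≤ σ.length := by
  rw [des_eq_card_isDescSpace]
  exact (card_filter_le _ _).trans (card_range _).le

theorem majLabel_of_isDescSpace {σ : List ℕ} {j : ℕ} (h : isDescSpace σ j) :
    majLabel σ j = 1 + #{t ∈ Ico (j + 1) σ.length | isDescSpace σ t} := by
  rw [majLabel, if_neg (Nat.ne_of_lt h.2.1), if_pos h]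

theorem majLabel_of_not_isDescSpace {σ : List ℕ} {j : ℕ} (hj : j ≠ σ.length)
    (h : ¬ isDescSpace σ j) :
    majLabel σ j = des σ + 1 + #{t ∈ range j | ¬ isDescSpace σ t} := by
  rw [majLabel, if_neg hj, if_neg h]

theorem majLabel_zero {σ : List ℕ} (hσ : σ ≠ []) : majLabel σ 0 = des σ + 1 := by
  rw [majLabel_of_not_isDescSpace (List.length_pos_iff.mpr hσ).ne (not_isDescSpace_zero σ)]
  simp

theorem majLabel_le_des_iff (σ : List ℕ) (j : ℕ) :
    majLabel σ j ≤ des σ ↔ j = σ.length ∨ isDescSpace σ j := by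
  by_cases hj : j = σ.length
  · simp [majLabel, hj]
  by_cases hd : isDescSpace σ j
  · simp only [hd, or_true, iff_true]
    have hsub : insert j {t ∈ Ico (j + 1) σ.length | isDescSpace σ t}
        ⊆ {t ∈ range σ.length | isDescSpace σ t} := by
      intro t
      simp only [mem_insert, mem_filter, mem_Ico, mem_range]
      rintro (rfl | ⟨⟨-, ht⟩, htd⟩)
      exacts [⟨hd.2.1, hd⟩, ⟨ht, htd⟩]
    have := card_le_card hsub
    rw [card_insert_of_notMem (by simp)] at this
    rw [majLabel_of_isDescSpace hd, des_eq_card_isDescSpace]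
    omega
  · rw [majLabel_of_not_isDescSpace hj hd]
    simp only [hj, hd, or_self, iff_false, not_le]
    omega

theorem majLabel_mapsTo (σ : List ℕ) :
    Set.MapsTo (majLabel σ) (Set.Iic σ.length) (Set.Iic σ.length) := by
  intro j (hj : j ≤ σ.length)
  show majLabel σ j ≤ σ.length
  by_cases hfin : j = σ.length ∨ isDescSpace σ j
  · exact ((majLabel_le_des_iff σ j).2 hfin).trans (des_le_length σ)
  rw [not_or] at hfin
  have hrange := card_filter_range_lt_of_lt (p := fun t => ¬ isDescSpace σ t)
    (lt_of_le_of_ne hj hfin.1) hfin.2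
  have hsplit := card_filter_add_card_filter_not (s := range σ.length) (p := isDescSpace σ)
  rw [card_range, ← des_eq_card_isDescSpace] at hsplit
  rw [majLabel_of_not_isDescSpace hfin.1 hfin.2]
  omega

theorem majLabel_injOn (σ : List ℕ) : Set.InjOn (majLabel σ) (Set.Iic σ.length) := by
  suffices key : ∀ a b, a < b → b ≤ σ.length → majLabel σ a ≠ majLabel σ b by
    intro a (ha : a ≤ σ.length) b (hb : b ≤ σ.length) hab
    by_contra hne
    rcases Nat.lt_or_gt_of_ne hne with h | h
    exacts [key a b h hb hab, key b a h ha hab.symm]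
  intro a b hab hb heq
  have ha : a ≠ σ.length := by omega
  by_cases hda : isDescSpace σ a
  · have hdb := (majLabel_le_des_iff σ b).1 (heq ▸ (majLabel_le_des_iff σ a).2 (Or.inr hda))
    rw [majLabel_of_isDescSpace hda] at heq
    rcases hdb with rfl | hdb
    · simp [majLabel] at heq
    · rw [majLabel_of_isDescSpace hdb] at heq
      have := card_filter_Ico_lt_of_lt hab hdb.2.1 hdb
      omega
  · have hdb : ¬ (b = σ.length ∨ isDescSpace σ b) := fun h =>
      hda (((majLabel_le_des_iff σ a).1 (heq ▸ (majLabel_le_des_iff σ b).2 h)).resolve_left ha)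
    rw [not_or] at hdb
    rw [majLabel_of_not_isDescSpace ha hda, majLabel_of_not_isDescSpace hdb.1 hdb.2] at heq
    have := card_filter_range_lt_of_lt (p := fun t => ¬ isDescSpace σ t) hab hda
    omega

theorem majLabel_surjOn (σ : List ℕ) :
    Set.SurjOn (majLabel σ) (Set.Iic σ.length) (Set.Iic σ.length) := by
  simpa using surjOn_of_injOn_of_card_le (s := Iic σ.length) (t := Iic σ.length) (majLabel σ)
    (by simpa using majLabel_mapsTo σ) (by simpa using majLabel_injOn σ) le_rfl

theorem spaceOfLabel_spec {lab : List ℕ → ℕ → ℕ} {σ : List ℕ} {s : ℕ}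
    (hs : s ∈ lab σ '' Set.Iic σ.length) :
    spaceOfLabel lab σ s ≤ σ.length ∧ lab σ (spaceOfLabel lab σ s) = s := by
  obtain ⟨j, hj, rfl⟩ := hs
  obtain ⟨j', hfind⟩ : ∃ j', (List.range (σ.length + 1)).find?
      (fun j' => decide (lab σ j' = lab σ j)) = some j' := by
    rw [← Option.isSome_iff_exists, List.find?_isSome]
    exact ⟨j, List.mem_range.mpr (Nat.lt_succ_of_le hj), by simp⟩
  rw [spaceOfLabel, hfind, Option.getD_some]
  exact ⟨Nat.le_of_lt_succ (List.mem_range.mp (List.mem_of_find?_eq_some hfind)),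
    by simpa using List.find?_some hfind⟩

theorem statLabel_le_des_iff (σ : List ℕ) (j : ℕ) :
    statLabel σ j ≤ des σ ↔ j = σ.length ∨ isDescSpace σ j := by
  by_cases hj : j = σ.length
  · simp [statLabel, hj]
  by_cases hd : isDescSpace σ j
  · simp only [statLabel, hj, hd, if_false, if_true, or_true, iff_true]
    rw [des_eq_card_isDescSpace]
    exact card_le_card (filter_subset_filter _ (range_subset_range.mpr hd.2.1.le))
  · simp only [statLabel, hj, hd, or_self, iff_false, if_false]
    split_ifs <;> omega

theorem statLabel_le_length {σ : List ℕ} {j : ℕ} (hj : j ≤ σ.length) :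
    statLabel σ j ≤ σ.length := by
  by_cases hfin : j = σ.length ∨ isDescSpace σ j
  · exact ((statLabel_le_des_iff σ j).2 hfin).trans (des_le_length σ)
  rw [not_or] at hfin
  have hσ : σ ≠ [] := by rintro rfl; simp_all
  have hasc := des_add_card_isAscSpace_lt hσ
  have hsub :
      #{t ∈ Ico j σ.length | isAscSpace σ t} ≤ #{t ∈ range σ.length | isAscSpace σ t} :=
    card_le_card (filter_subset_filter _ (by simpa using Ico_subset_Ico_left (Nat.zero_le j)))
  simp only [statLabel, hfin.1, hfin.2, if_false]
  split_ifs <;> omega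

theorem isAscSpace_of_not_isDescSpace {σ : List ℕ} {j : ℕ} (hnd : σ.Nodup) (hj0 : j ≠ 0)
    (hj : j < σ.length) (h : ¬ isDescSpace σ j) : isAscSpace σ j := by
  have hprev : j - 1 < σ.length := by omega
  have hne : σ[j - 1] ≠ σ[j] := fun he => by
    have := (hnd.getElem_inj_iff).mp he
    omega
  unfold isDescSpace at h
  unfold isAscSpace
  rw [List.getD_eq_getElem σ 0 hj, List.getD_eq_getElem σ 0 hprev] at h ⊢
  omega

theorem statLabel_ne_des_add_one {σ : List ℕ} {j : ℕ} (hnd : σ.Nodup) (hj0 : j ≠ 0)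
    (hj : j ≤ σ.length) : statLabel σ j ≠ des σ + 1 := by
  by_cases hfin : j = σ.length ∨ isDescSpace σ j
  · have := (statLabel_le_des_iff σ j).2 hfin
    omega
  rw [not_or] at hfin
  have hmem : j ∈ {t ∈ Ico j σ.length | isAscSpace σ t} := by
    simp only [mem_filter, mem_Ico, le_refl, true_and]
    have hlt := lt_of_le_of_ne hj hfin.1
    exact ⟨hlt, isAscSpace_of_not_isDescSpace hnd hj0 hlt hfin.2⟩
  have := card_pos.mpr ⟨j, hmem⟩
  simp only [statLabel, hfin.1, hfin.2, hj0, if_false]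
  omega

theorem des_insertIdx_eq_statLabel {σ : List ℕ} {v j : ℕ} (hv : ∀ x ∈ σ, x < v)
    (hj : j ≤ σ.length) :
    des (σ.insertIdx j v) = des σ + if statLabel σ j ≤ des σ then 0 else 1 := by
  simp only [des_insertIdx_of_forall_lt hv hj, statLabel_le_des_iff]

theorem des_insertAtMajLabel {σ : List ℕ} {s v : ℕ} (hv : ∀ x ∈ σ, x < v)
    (hs : s ≤ σ.length) :
    des (insertAtMajLabel s σ v) = des σ + if s ≤ des σ then 0 else 1 := by
  obtain ⟨hj, hlab⟩ := spaceOfLabel_spec (majLabel_surjOn σ hs)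
  conv_rhs => rw [← hlab]
  simp only [insertAtMajLabel, des_insertIdx_of_forall_lt hv hj, majLabel_le_des_iff]

theorem headD_insertAtMajLabel {σ : List ℕ} {s : ℕ} (v : ℕ) (hσ : σ ≠ [])
    (hs : s ≤ σ.length) (hs' : s ≠ des σ + 1) :
    (insertAtMajLabel s σ v).headD 0 = σ.headD 0 := by
  obtain ⟨-, hlab⟩ := spaceOfLabel_spec (majLabel_surjOn σ hs)
  obtain ⟨a, t, rfl⟩ := List.exists_cons_of_ne_nil hσ
  rw [insertAtMajLabel]
  rcases hj : spaceOfLabel majLabel (a :: t) s with _ | j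
  · rw [hj, majLabel_zero hσ] at hlab
    exact absurd hlab.symm hs'
  · rfl

theorem length_insertAtMajLabel {σ : List ℕ} {s : ℕ} (v : ℕ) (hs : s ≤ σ.length) :
    (insertAtMajLabel s σ v).length = σ.length + 1 :=
  List.length_insertIdx_of_le_length (spaceOfLabel_spec (majLabel_surjOn σ hs)).1 v

theorem length_filter_le_map_range (n m : ℕ) :
    (((List.range n).map (· + 1)).filter (· ≤ m)).length = min m n := by
  induction n with
  | zero => simp
  | succ n ih =>
    rw [List.range_succ, List.map_append, List.filter_append, List.length_append, ih]
    by_cases h : n + 1 ≤ m <;> simp [h] <;> omega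

theorem filter_le_eq_insertIdx {π : List ℕ} (hnd : π.Nodup) {i : ℕ} (hi : i + 1 ∈ π) :
    (π.filter (· ≤ i)).insertIdx ((π.filter (· ≤ i + 1)).idxOf (i + 1)) (i + 1)
      = π.filter (· ≤ i + 1) := by
  have herase : (π.filter (· ≤ i + 1)).erase (i + 1) = π.filter (· ≤ i) := by
    rw [(hnd.filter _).erase_eq_filter, List.filter_filter]
    refine List.filter_congr fun x _ => ?_
    rw [Bool.eq_iff_iff]
    simp only [Bool.and_eq_true, bne_iff_ne, decide_eq_true_eq]
    omega
  rw [← herase]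
  exact List.insertIdx_idxOf_erase (List.mem_filter.mpr ⟨hi, by simp⟩)

theorem idxOf_filter_le_ne_zero {π : List ℕ} {i : ℕ} (hπ : π ≠ []) (hi : F π ≤ i) :
    (π.filter (· ≤ i + 1)).idxOf (i + 1) ≠ 0 := by
  obtain ⟨k, t, rfl⟩ := List.exists_cons_of_ne_nil hπ
  have hk : k ≤ i := hi
  rw [List.filter_cons_of_pos (by simpa using hk.trans i.le_succ), List.idxOf_cons_ne _ (by omega)]
  omega

theorem statTable_getD {π : List ℕ} {i : ℕ} (hi : i < π.length) (hi0 : i ≠ 0) :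
    (statTable π).getD i 0
      = statLabel (π.filter (· ≤ i)) ((π.filter (· ≤ i + 1)).idxOf (i + 1)) := by
  simp [statTable, hi, hi0]

namespace isPerm

variable {π : List ℕ} {n : ℕ}

theorem nodup (hπ : isPerm π n) : π.Nodup :=
  hπ.nodup_iff.mpr (List.nodup_range.map fun _ _ => Nat.add_right_cancel)

theorem mem_iff (hπ : isPerm π n) {x : ℕ} : x ∈ π ↔ 1 ≤ x ∧ x ≤ n := by
  rw [List.Perm.mem_iff hπ, List.mem_map]
  simp only [List.mem_range]
  constructor
  · rintro ⟨a, ha, rfl⟩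
    omega
  · rintro ⟨h1, h2⟩
    exact ⟨x - 1, by omega, by omega⟩

theorem length (hπ : isPerm π n) : π.length = n := by
  simpa using hπ.length_eq

theorem length_filter_le (hπ : isPerm π n) (m : ℕ) :
    (π.filter (· ≤ m)).length = min m n := by
  rw [(List.Perm.filter _ hπ).length_eq, length_filter_le_map_range]

theorem F_mem (hπ : isPerm π n) (hn : n ≠ 0) : F π ∈ π := by
  obtain ⟨k, t, rfl⟩ := List.exists_cons_of_ne_nil
    (List.ne_nil_of_length_pos (hπ.length ▸ Nat.pos_of_ne_zero hn))
  exact List.mem_cons_self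

theorem one_le_F (hπ : isPerm π n) (hn : n ≠ 0) : 1 ≤ F π :=
  (hπ.mem_iff.mp (hπ.F_mem hn)).1

theorem F_le (hπ : isPerm π n) (hn : n ≠ 0) : F π ≤ n := (hπ.mem_iff.mp (hπ.F_mem hn)).2

theorem filter_le_F (hπ : isPerm π n) (hn : n ≠ 0) :
    ∃ t, π.filter (· ≤ F π) = F π :: t ∧ ∀ x ∈ t, 0 < x ∧ x < F π := by
  have hmem := hπ.F_mem hn
  have hnd := hπ.nodup
  obtain ⟨k, t, rfl⟩ := List.exists_cons_of_ne_nil (List.ne_nil_of_mem hmem)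
  refine ⟨t.filter (· ≤ k), List.filter_cons_of_pos (by simp [F]), fun x hx => ?_⟩
  obtain ⟨hxt, hxk⟩ := List.mem_filter.mp hx
  have hx1 := (hπ.mem_iff.mp (List.mem_cons_of_mem k hxt)).1
  have hne : x ≠ k := fun h => (List.nodup_cons.mp hnd).1 (h ▸ hxt)
  simp only [decide_eq_true_eq] at hxk
  exact ⟨hx1, lt_of_le_of_ne hxk hne⟩

theorem exists_statTable_getD_eq_statLabel (hπ : isPerm π n) {i : ℕ} (hk : F π ≤ i)
    (hi : i < n) : ∃ j, j ≠ 0 ∧ j ≤ (π.filter (· ≤ i)).length ∧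
      (statTable π).getD i 0 = statLabel (π.filter (· ≤ i)) j ∧
      (π.filter (· ≤ i)).insertIdx j (i + 1) = π.filter (· ≤ i + 1) := by
  have hn : n ≠ 0 := by omega
  have hmem : i + 1 ∈ π.filter (· ≤ i + 1) :=
    List.mem_filter.mpr ⟨hπ.mem_iff.mpr ⟨by omega, hi⟩, by simp⟩
  refine ⟨_, idxOf_filter_le_ne_zero (List.ne_nil_of_mem (hπ.F_mem hn)) hk, ?_,
    statTable_getD (hπ.length ▸ hi) (by have := hπ.one_le_F hn; omega),
    filter_le_eq_insertIdx hπ.nodup (List.mem_of_mem_filter hmem)⟩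
  have := List.idxOf_lt_length_of_mem hmem
  rw [hπ.length_filter_le] at this ⊢
  omega

theorem statTable_getD_le (hπ : isPerm π n) {i : ℕ} (hk : F π ≤ i) (hi : i < n) :
    (statTable π).getD i 0 ≤ i := by
  obtain ⟨j, -, hj, hs, -⟩ := hπ.exists_statTable_getD_eq_statLabel hk hi
  rw [hs]
  exact (statLabel_le_length hj).trans_eq (by rw [hπ.length_filter_le]; omega)

theorem statTable_getD_ne_des_add_one (hπ : isPerm π n) {i : ℕ} (hk : F π ≤ i) (hi : i < n) :
    (statTable π).getD i 0 ≠ des (π.filter (· ≤ i)) + 1 := by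
  obtain ⟨j, hj0, hj, hs, -⟩ := hπ.exists_statTable_getD_eq_statLabel hk hi
  rw [hs]
  exact statLabel_ne_des_add_one (hπ.nodup.filter _) hj0 hj

theorem des_filter_le_succ (hπ : isPerm π n) {i : ℕ} (hk : F π ≤ i) (hi : i < n) :
    des (π.filter (· ≤ i + 1)) = des (π.filter (· ≤ i)) +
      if (statTable π).getD i 0 ≤ des (π.filter (· ≤ i)) then 0 else 1 := by
  obtain ⟨j, -, hj, hs, hins⟩ := hπ.exists_statTable_getD_eq_statLabel hk hi
  have hv : ∀ x ∈ π.filter (· ≤ i), x < i + 1 := fun x hx => by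
    simpa [Nat.lt_succ_iff] using (List.mem_filter.mp hx).2
  rw [hs, ← hins, des_insertIdx_eq_statLabel hv hj]

end isPerm

/-- `rhoStage π m` is the word `σ^{(k+m)}` of the construction of `ρ`, where `k = F π`. -/
def rhoStage (π : List ℕ) : ℕ → List ℕ
  | 0 => F π :: ((π.filter (· ≤ F π)).tail.map (F π - ·)).reverse
  | m + 1 => insertAtMajLabel ((statTable π).getD (F π + m) 0) (rhoStage π m) (F π + m + 1)

theorem rho_eq_rhoStage (π : List ℕ) : rho π = rhoStage π (π.length - F π) := by
  suffices h : ∀ m, (List.range m).foldl (fun σ m =>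
      insertAtMajLabel ((statTable π).getD (F π + m) 0) σ (F π + m + 1)) (rhoStage π 0)
      = rhoStage π m from h _
  intro m
  induction m with
  | zero => rfl
  | succ m ih => rw [List.range_succ, List.foldl_append, ih]; rfl

theorem le_of_mem_rhoStage {π : List ℕ} {m x : ℕ} (hx : x ∈ rhoStage π m) :
    x ≤ F π + m := by
  induction m with
  | zero =>
    simp only [rhoStage, List.mem_cons, List.mem_reverse, List.mem_map] at hx
    omega
  | succ m ih =>
    rcases List.eq_or_mem_of_mem_insertIdx hx with rfl | hx
    · omega
    · have := ih hx
      omega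

section

variable {π : List ℕ} {n m : ℕ}

theorem length_rhoStage (hπ : isPerm π n) (hn : n ≠ 0) (hm : F π + m ≤ n) :
    (rhoStage π m).length = F π + m := by
  induction m with
  | zero =>
    obtain ⟨t, ht, -⟩ := hπ.filter_le_F hn
    have := hπ.length_filter_le (F π)
    rw [ht, List.length_cons, min_eq_left (hπ.F_le hn)] at this
    simp [rhoStage, ht, this]
  | succ m ih =>
    have hs := hπ.statTable_getD_le (i := F π + m) (by omega) (by omega)
    rw [rhoStage, length_insertAtMajLabel _ (by rw [ih (by omega)]; exact hs), ih (by omega)]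
    rfl

theorem des_rhoStage (hπ : isPerm π n) (hn : n ≠ 0) (hm : F π + m ≤ n) :
    des (rhoStage π m) = des (π.filter (· ≤ F π + m)) := by
  induction m with
  | zero =>
    obtain ⟨t, ht, hbound⟩ := hπ.filter_le_F hn
    simp only [rhoStage, Nat.add_zero, ht, List.tail_cons]
    exact des_cons_reverse_map_tsub hbound
  | succ m ih =>
    have hs := hπ.statTable_getD_le (i := F π + m) (by omega) (by omega)
    rw [rhoStage, des_insertAtMajLabel (fun x hx => Nat.lt_succ_of_le (le_of_mem_rhoStage hx))
      (by rw [length_rhoStage hπ hn (by omega)]; exact hs), ih (by omega),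
      ← Nat.add_assoc, hπ.des_filter_le_succ (by omega) (by omega)]

theorem F_rhoStage (hπ : isPerm π n) (hn : n ≠ 0) (hm : F π + m ≤ n) :
    F (rhoStage π m) = F π := by
  induction m with
  | zero => rfl
  | succ m ih =>
    have hlen := length_rhoStage hπ hn (m := m) (by omega)
    have hs := hπ.statTable_getD_le (i := F π + m) (by omega) (by omega)
    have hs' := hπ.statTable_getD_ne_des_add_one (i := F π + m) (by omega) (by omega)
    rw [← des_rhoStage hπ hn (m := m) (by omega)] at hs'
    have hne : rhoStage π m ≠ [] := List.ne_nil_of_length_pos (by have := hπ.one_le_F hn; omega)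
    rw [F, rhoStage, headD_insertAtMajLabel _ hne (hlen ▸ hs) hs']
    exact ih (by omega)

end

end BS

/-- ρ preserves the first letter and the descent number. -/
theorem rho_preserves_F_des (n : ℕ) (π : List ℕ) (hπ : BS.isPerm π n) :
    BS.F (BS.rho π) = BS.F π ∧ BS.des (BS.rho π) = BS.des π := by
  rcases Nat.eq_zero_or_pos n with rfl | hn
  · obtain rfl : π = [] := List.perm_nil.mp hπ
    exact ⟨rfl, rfl⟩
  have hF := hπ.F_le hn.ne'
  have hm : BS.F π + (π.length - BS.F π) = n := by rw [hπ.length]; omega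
  have hfilter : π.filter (· ≤ n) = π :=
    List.filter_eq_self.mpr fun x hx => by simpa using (hπ.mem_iff.mp hx).2
  rw [BS.rho_eq_rhoStage, BS.F_rhoStage hπ hn.ne' hm.le, BS.des_rhoStage hπ hn.ne' hm.le, hm,
    hfilter]
  exact ⟨rfl, rfl⟩
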